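/- Let R̂₃ be the 4×4 matrix with rows (1, 0, 0, 1), (0, 0, -1, 0), (0, -1, 0, 0), (0, 0, 0, 1). Then (R̂₃ - I)²(R̂₃ + I) = 0 and (R̂₃ - I)(R̂₃ + I) ≠ 0. -/

import Mathlib

/-!
Squaring `R̂₃` gives `R̂₃ ^ 2 = 1 + 2 E₀₃`, so `(R̂₃ - 1)(R̂₃ + 1) = R̂₃ ^ 2 - 1 = 2 E₀₃`, which is
nonzero as soon as `2 ≠ 0`. Multiplying once more by `R̂₃ - 1` on the left kills it, because the
product `M E₀₃` only sees column `0` of `M`, and column `0` of `R̂₃ - 1` vanishes.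
-/

open Matrix

theorem Matrix.mul_single_eq_zero_of_col_eq_zero {l m n α : Type*} [Fintype m] [DecidableEq m]
    [DecidableEq n] [NonUnitalNonAssocSemiring α] {M : Matrix l m α} {i : m}
    (hM : ∀ k, M k i = 0) (j : n) (c : α) : M * single i j c = 0 := by
  ext a b
  by_cases hb : b = j
  · subst hb
    simp [hM]
  · simp [hb]

section RHat

variable (K : Type*) [Ring K]

def rHat3 : Matrix (Fin 4) (Fin 4) K :=
  !![1, 0, 0, 1; 0, 0, -1, 0; 0, -1, 0, 0; 0, 0, 0, 1]

theorem rHat3_sq_sub_one : rHat3 K ^ 2 - 1 = single 0 3 2 := by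
  ext i j
  fin_cases i <;> fin_cases j <;> simp [rHat3, sq, one_add_one_eq_two]

theorem rHat3_sub_one_col_zero (k : Fin 4) : (rHat3 K - 1) k 0 = 0 := by
  fin_cases k <;> simp [rHat3]

theorem rHat3_sub_one_mul_add_one : (rHat3 K - 1) * (rHat3 K + 1) = single 0 3 2 := by
  rw [← rHat3_sq_sub_one]
  noncomm_ring

end RHat

theorem stmt3 (K : Type*) [Field K] [CharZero K]
    (Rhat : Matrix (Fin 4) (Fin 4) K)
    (hR : Rhat = !![1, 0, 0, 1; 0, 0, -1, 0; 0, -1, 0, 0; 0, 0, 0, 1]) :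
    (Rhat - 1) ^ 2 * (Rhat + 1) = 0 ∧ (Rhat - 1) * (Rhat + 1) ≠ 0 := by
  obtain rfl : Rhat = rHat3 K := hR
  refine ⟨?_, ?_⟩
  · rw [sq, mul_assoc, rHat3_sub_one_mul_add_one]
    exact mul_single_eq_zero_of_col_eq_zero (rHat3_sub_one_col_zero K) 3 2
  · rw [rHat3_sub_one_mul_add_one]
    intro h
    simpa using congrFun₂ h 0 3
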